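/- Let q ≥ 3, let d ≥ 1, let 2 ≤ t ≤ r ≤ d, and let ω ∈ ℂ be a primitive q-th root of unity. Let X be a nonempty set of words of length d over the alphabet {0,1,…,q}, each having exactly r nonzero entries, such that for some constant λ_t, every word y of length d with exactly t nonzero entries (each in {1,…,q}) satisfies |{x ∈ X : y ⪯ x}| = λ_t, where y ⪯ x means that for every index i, either y_i = 0 or y_i = x_i (i.e., X is a nonbinary block t-design). Define ψ(x) ∈ ℂ^d by ψ(x)_k = ω^{x_k}/√r if x_k ≠ 0 and ψ(x)_k = 0 if x_k = 0; then ψ is injective on X, ψ(X) ⊆ Ω(d), and ψ(X) is a complex spherical 𝒯-design for 𝒯 = {(k,l) ∈ ℕ×ℕ : k+l ≤ 2}. -/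

import Mathlib

/-!
Double counting the pairs `(x, j)` with `w ⪯ x ∈ X` and `j ∈ supp x \ supp w` shows that a
block design of strength `s + 1` whose blocks have rank `r > s` is also one of strength `s`.
Hence `X` is an orthogonal array of every strength `s ≤ t`: for a set `S` of `s` coordinates,
every nonzero pattern on `S` is carried by the same number of words of `X`.

A monomial `∏ zᵢ ^ aᵢ * conj zᵢ ^ bᵢ` of total degree `≤ 2 ≤ t` only involves its support `S`,
so its sum over `ψ(X)` factors as `λ_S ∏_{i ∈ S} ∑_{c=1}^q ω ^ (c (aᵢ - bᵢ)) / √r ^ (aᵢ + bᵢ)`.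
If `a ≠ b`, some factor is a full sum of powers of the root of unity `ω ^ (aᵢ - bᵢ) ≠ 1`
(as `|aᵢ - bᵢ| ≤ 2 < q`), hence vanishes. For `a = b = eᵢ`, the sum `∑ₓ |ψ(x)ᵢ|²` does not
depend on `i`, and summing over `i` gives `|X|` because the `ψ(x)` are unit vectors.
-/

open Finset

/-- The Hermitian inner product `x^* y = ∑ i, conj (x i) * y i` on `ℂ^d`. -/
noncomputable def cInner {d : ℕ} (x y : Fin d → ℂ) : ℂ :=
  ∑ i, (starRingEnd ℂ) (x i) * y i

/-- A lower set in `ℕ × ℕ` with respect to the product order. -/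
def IsLowerSet' (T : Finset (ℕ × ℕ)) : Prop :=
  ∀ kl ∈ T, ∀ mn : ℕ × ℕ, mn.1 ≤ kl.1 → mn.2 ≤ kl.2 → mn ∈ T

/-- The average over the unit sphere `Ω(d)` of the monomial
`z ↦ ∏ i, z i ^ a i * conj (z i) ^ b i`. -/
noncomputable def monomialAvg (d : ℕ) (a b : Fin d → ℕ) : ℂ :=
  if a = b then
    ((Nat.factorial (d - 1) : ℂ) * ∏ i, (Nat.factorial (a i) : ℂ)) /
      (Nat.factorial (d + (∑ i, a i) - 1) : ℂ)
  else 0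

/-- `X` is a complex spherical `T`-design: every monomial of bidegree `(k,l) ∈ T`
has the same average over `X` as over the sphere `Ω(d)`. -/
def IsDesign (d : ℕ) (X : Finset (Fin d → ℂ)) (T : Finset (ℕ × ℕ)) : Prop :=
  ∀ kl ∈ T, ∀ a b : Fin d → ℕ, (∑ i, a i) = kl.1 → (∑ i, b i) = kl.2 →
    (∑ z ∈ X, (∏ i, (z i) ^ (a i)) * ∏ i, ((starRingEnd ℂ) (z i)) ^ (b i))
      = (X.card : ℂ) * monomialAvg d a b

/-- The Jacobi polynomial `g_{k,l}` for the complex sphere in dimension `d`. -/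
noncomputable def jacobi (d k l : ℕ) (x : ℂ) : ℂ :=
  (((d + k + l - 1 : ℕ) : ℂ) / (Nat.factorial (d - 1) : ℂ)) *
    ∑ r ∈ Finset.range (min k l + 1),
      (((-1 : ℂ) ^ r * (Nat.factorial (d + k + l - r - 2) : ℂ)) /
          ((Nat.factorial r : ℂ) * (Nat.factorial (k - r) : ℂ) *
            (Nat.factorial (l - r) : ℂ))) *
        x ^ (k - r) * ((starRingEnd ℂ) x) ^ (l - r)

open scoped Classical in
/-- The inner product set `A(X) = {x^* y : x, y ∈ X, x ≠ y}`. -/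
noncomputable def innerSet {d : ℕ} (X : Finset (Fin d → ℂ)) : Finset ℂ :=
  ((X ×ˢ X).filter fun p => p.1 ≠ p.2).image fun p => cInner p.1 p.2

/-- `m_{k,l}`, the dimension of the harmonic space `Harm(k,l)` in dimension `d`. -/
def mdim (d k l : ℕ) : ℕ :=
  (d + k - 1).choose (d - 1) * (d + l - 1).choose (d - 1) -
    (d + k - 2).choose (d - 1) * (d + l - 2).choose (d - 1)

/-- The convolution `U * V = {(k + l', k' + l) : (k,l) ∈ U, (k',l') ∈ V}`. -/
def convSet (U V : Finset (ℕ × ℕ)) : Finset (ℕ × ℕ) :=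
  (U ×ˢ V).image fun p => (p.1.1 + p.2.2, p.2.1 + p.1.2)

/-- `X` is an `S`-code: it has an annihilator polynomial supported on monomials
`x^k * conj x^l` with `(k,l) ∈ S`. -/
def IsCode (d : ℕ) (X : Finset (Fin d → ℂ)) (S : Finset (ℕ × ℕ)) : Prop :=
  ∃ c : ℕ × ℕ → ℝ,
    (∀ α ∈ innerSet X, ∑ kl ∈ S, (c kl : ℂ) * α ^ kl.1 * ((starRingEnd ℂ) α) ^ kl.2 = 0) ∧
    0 < ∑ kl ∈ S, c kl

open scoped Classical

/-- The map `ψ` sending a word over `{0,1,…,q}` to a unit vector in `ℂ^d`: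
`ψ(x)_k = ω^{x_k}/√r` if `x_k ≠ 0` and `0` otherwise. -/
noncomputable def psiMap (d q r : ℕ) (ω : ℂ) (x : Fin d → Fin (q + 1)) : Fin d → ℂ :=
  fun k => if x k = 0 then 0 else ω ^ ((x k : ℕ)) / (Real.sqrt r : ℂ)

open ComplexConjugate

theorem sum_fin_pow_succ_eq_zero {K : Type*} [DivisionRing K] {q : ℕ} {ζ : K} (hζq : ζ ^ q = 1)
    (hζ : ζ ≠ 1) : ∑ c : Fin q, ζ ^ ((c : ℕ) + 1) = 0 := by
  rw [Fin.sum_univ_eq_sum_range (fun c => ζ ^ (c + 1)) q]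
  simp only [pow_succ, ← sum_mul, geom_sum_eq hζ, hζq, sub_self, zero_div, zero_mul]

theorem exists_eq_pi_single_of_sum_eq_one {ι : Type*} [Fintype ι] [DecidableEq ι] {a : ι → ℕ}
    (h : ∑ i, a i = 1) : ∃ i, a = Pi.single i 1 := by
  obtain ⟨i, hi⟩ := (Finsupp.sum_eq_one_iff (Finsupp.equivFunOnFinite.symm a)).1
    (by simpa [Finsupp.sum_fintype] using h)
  exact ⟨i, by simpa [← Finsupp.single_eq_pi_single] using congrArg (⇑) hi⟩

theorem prod_pow_pi_single {ι M : Type*} [Fintype ι] [DecidableEq ι] [CommMonoid M]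
    (z : ι → M) (i : ι) : ∏ j, z j ^ (Pi.single i 1 : ι → ℕ) j = z i := by
  simp [Pi.single_apply, pow_ite]

theorem prod_pow_mul_prod_pow {ι M : Type*} [Fintype ι] [CommMonoid M] (z w : ι → M)
    (a b : ι → ℕ) :
    (∏ i, z i ^ a i) * ∏ i, w i ^ b i = ∏ i with a i + b i ≠ 0, z i ^ a i * w i ^ b i := by
  rw [← prod_mul_distrib]
  exact (prod_subset (subset_univ _) fun i _ hi => by simp_all).symm

theorem card_filter_ne_zero_le_sum {ι : Type*} (s : Finset ι) (f : ι → ℕ) :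
    #{i ∈ s | f i ≠ 0} ≤ ∑ i ∈ s, f i := by
  rw [card_eq_sum_ones, sum_filter]
  exact sum_le_sum fun i _ => by split_ifs with h <;> omega

theorem sum_piFinset_prod_mem {ι α M : Type*} [Fintype ι] [DecidableEq ι] [Fintype α] [Zero α]
    [CommSemiring M] (S : Finset ι) (F : ι → α → M) :
    ∑ p ∈ Fintype.piFinset (fun i => if i ∈ S then univ else {0}), ∏ i ∈ S, F i (p i) =
      ∏ i ∈ S, ∑ c, F i c := by
  calc _ = ∑ p ∈ Fintype.piFinset (fun i => if i ∈ S then univ else {0}),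
        ∏ i, if i ∈ S then F i (p i) else 1 := by simp only [prod_ite_mem, univ_inter]
    _ = ∏ i, ∑ c ∈ (if i ∈ S then univ else {0}), if i ∈ S then F i c else 1 :=
        (prod_univ_sum (κ := fun _ => α) _ fun i c => if i ∈ S then F i c else 1).symm
    _ = ∏ i, if i ∈ S then ∑ c, F i c else 1 := by
        refine prod_congr rfl fun i _ => ?_
        split_ifs <;> simp_all
    _ = ∏ i ∈ S, ∑ c, F i c := by rw [prod_ite_mem, univ_inter]

section Words

variable {ι α : Type*} [Zero α]

/-- `y ⪯ x` in the paper. -/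
def IsSubword (y x : ι → α) : Prop := ∀ i, y i = 0 ∨ y i = x i

theorem isSubword_update_iff [DecidableEq ι] {w x : ι → α} {j : ι} {c : α} (hwj : w j = 0)
    (hc : c ≠ 0) :
    IsSubword (Function.update w j c) x ↔ IsSubword w x ∧ x j = c := by
  constructor
  · intro h
    refine ⟨fun i => ?_, ?_⟩
    · by_cases hij : i = j
      · exact Or.inl (hij ▸ hwj)
      · simpa [hij] using h i
    · simpa [hc, eq_comm] using h j
  · rintro ⟨h, rfl⟩ i
    by_cases hij : i = j
    · subst hij; simp
    · simpa [hij] using h i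

variable [Fintype ι] [DecidableEq α]

def IsBlockDesign (X : Finset (ι → α)) (t lam : ℕ) : Prop :=
  ∀ y : ι → α, hammingNorm y = t → #{x ∈ X | IsSubword y x} = lam

theorem card_filter_eq_zero (w : ι → α) : #{j | w j = 0} = Fintype.card ι - hammingNorm w := by
  rw [hammingNorm, ← card_univ, ← card_filter_add_card_filter_not (s := univ) (w · = 0),
    Nat.add_sub_cancel]

variable [DecidableEq ι]

theorem hammingNorm_update_of_eq_zero {w : ι → α} {j : ι} {c : α} (hwj : w j = 0) (hc : c ≠ 0) :
    hammingNorm (Function.update w j c) = hammingNorm w + 1 := by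
  have : univ.filter (Function.update w j c · ≠ 0) = insert j (univ.filter (w · ≠ 0)) := by
    ext i; by_cases hij : i = j <;> simp [hij, hwj, hc]
  rw [hammingNorm, hammingNorm, this, card_insert_of_notMem (by simp [hwj])]

theorem IsSubword.hammingNorm_add_card {w x : ι → α} (h : IsSubword w x) :
    hammingNorm w + #{j | w j = 0 ∧ x j ≠ 0} = hammingNorm x := by
  have hsub : univ.filter (w · ≠ 0) ⊆ univ.filter (x · ≠ 0) := by
    intro j hj
    simp only [mem_filter, mem_univ, true_and] at hj ⊢
    exact (h j).resolve_left hj ▸ hj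
  have hdiff : univ.filter (x · ≠ 0) \ univ.filter (w · ≠ 0) =
      univ.filter fun j => w j = 0 ∧ x j ≠ 0 := by
    ext j; simp [and_comm]
  rw [hammingNorm, hammingNorm, ← hdiff, card_sdiff_of_subset hsub]
  exact Nat.add_sub_of_le (card_le_card hsub)

theorem IsBlockDesign.card_filter_piecewise_eq {X : Finset (ι → α)} {S : Finset ι} {lam : ℕ}
    (hX : IsBlockDesign X #S lam) {p : ι → α} (hp : ∀ i, p i ≠ 0 ↔ i ∈ S) :
    #{x ∈ X | S.piecewise x (0 : ι → α) = p} = lam := by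
  rw [← hX p (by rw [hammingNorm]; congr 1; ext i; simpa using hp i)]
  refine congrArg card (filter_congr fun x _ => ?_)
  simp only [funext_iff, IsSubword]
  refine forall_congr' fun i => ?_
  by_cases hi : i ∈ S
  · simp [hi, (hp i).2 hi, eq_comm]
  · simp [hi, not_not.1 (mt (hp i).1 hi)]

variable [Fintype α]

theorem card_isSubword_mul_sub {X : Finset (ι → α)} {r s lam : ℕ}
    (hrank : ∀ x ∈ X, hammingNorm x = r) (hX : IsBlockDesign X (s + 1) lam)
    {w : ι → α} (hw : hammingNorm w = s) :
    #{x ∈ X | IsSubword w x} * (r - s) =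
      (Fintype.card ι - s) * (Fintype.card α - 1) * lam := by
  set Xw := X.filter (IsSubword w)
  have hcount : ∀ j, w j = 0 → ∀ c : α, c ≠ 0 → #{x ∈ Xw | x j = c} = lam := by
    intro j hj c hc
    rw [← hX _ (by rw [hammingNorm_update_of_eq_zero hj hc, hw]), filter_filter]
    exact congrArg card (filter_congr fun x _ => (isSubword_update_iff hj hc).symm)
  calc #{x ∈ X | IsSubword w x} * (r - s)
      = ∑ x ∈ Xw, #{j | w j = 0 ∧ x j ≠ 0} := by
        rw [card_eq_sum_ones, sum_mul, one_mul]
        refine sum_congr rfl fun x hx => ?_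
        have hx' := mem_filter.1 hx
        rw [← hrank x hx'.1, ← hx'.2.hammingNorm_add_card, hw, Nat.add_sub_cancel_left]
    _ = ∑ j with w j = 0, #{x ∈ Xw | x j ≠ 0} := by
        simp only [card_filter]
        rw [sum_comm, sum_filter]
        refine sum_congr rfl fun j _ => ?_
        split_ifs with hj <;> simp [hj]
    _ = ∑ j with w j = 0, ∑ c with c ≠ 0, #{x ∈ Xw | x j = c} := by
        refine sum_congr rfl fun j _ => ?_
        rw [card_eq_sum_card_fiberwise (t := {c | c ≠ 0}) (f := fun x => x j)]
        · refine sum_congr rfl fun c hc => ?_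
          rw [filter_filter]
          exact congrArg card <|
            filter_congr fun x _ => ⟨And.right, fun h => ⟨h ▸ (mem_filter.1 hc).2, h⟩⟩
        · intro x hx; simpa using (mem_filter.1 hx).2
    _ = (Fintype.card ι - s) * (Fintype.card α - 1) * lam := by
        rw [sum_congr rfl fun j hj => sum_congr rfl fun c hc =>
          hcount j (mem_filter.1 hj).2 c (mem_filter.1 hc).2,
          sum_const, sum_const, smul_eq_mul, smul_eq_mul, card_filter_eq_zero, hw, filter_ne',
          card_erase_of_mem (mem_univ _), card_univ, mul_assoc]

theorem IsBlockDesign.of_succ {X : Finset (ι → α)} {r s lam : ℕ}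
    (hrank : ∀ x ∈ X, hammingNorm x = r) (hX : IsBlockDesign X (s + 1) lam) (hsr : s < r) :
    IsBlockDesign X s ((Fintype.card ι - s) * (Fintype.card α - 1) * lam / (r - s)) :=
  fun _ hw => Nat.eq_div_of_mul_eq_left (Nat.sub_ne_zero_of_lt hsr)
    (card_isSubword_mul_sub hrank hX hw)

theorem IsBlockDesign.exists_of_le {X : Finset (ι → α)} {r t lam s : ℕ}
    (hrank : ∀ x ∈ X, hammingNorm x = r) (hX : IsBlockDesign X t lam) (htr : t ≤ r)
    (hst : s ≤ t) : ∃ lam', IsBlockDesign X s lam' := by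
  induction t generalizing lam with
  | zero => exact ⟨lam, Nat.le_zero.1 hst ▸ hX⟩
  | succ t ih =>
    rcases hst.lt_or_eq with hst | rfl
    · exact ih (hX.of_succ hrank (by omega)) (by omega) (by omega)
    · exact ⟨lam, hX⟩

theorem IsBlockDesign.sum_prod_apply {M : Type*} [CommSemiring M] {X : Finset (ι → α)}
    {S : Finset ι} {lam : ℕ} (hX : IsBlockDesign X #S lam) (F : ι → α → M)
    (hF : ∀ i ∈ S, F i 0 = 0) :
    ∑ x ∈ X, ∏ i ∈ S, F i (x i) = lam • ∏ i ∈ S, ∑ c, F i c := by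
  set P := Fintype.piFinset fun i => if i ∈ S then (univ : Finset α) else {0}
  have hfiber : ∀ p ∈ P, ∏ i ∈ S, F i (p i) ≠ 0 →
      #{x ∈ X | S.piecewise x (0 : ι → α) = p} = lam := fun p hp hne =>
    hX.card_filter_piecewise_eq fun i => by
      by_cases hi : i ∈ S
      · exact iff_of_true (fun h => hne (prod_eq_zero hi (h ▸ hF i hi))) hi
      · simpa [hi, P] using Fintype.mem_piFinset.1 hp i
  calc ∑ x ∈ X, ∏ i ∈ S, F i (x i)
      = ∑ p ∈ P, ∑ x ∈ X with S.piecewise x (0 : ι → α) = p, ∏ i ∈ S, F i (x i) := by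
        refine (sum_fiberwise_of_maps_to (fun x _ => ?_) _).symm
        simp only [P, Fintype.mem_piFinset]
        intro i; by_cases hi : i ∈ S <;> simp [hi]
    _ = ∑ p ∈ P, lam • ∏ i ∈ S, F i (p i) := by
        refine sum_congr rfl fun p hp => ?_
        have hconst : ∀ x ∈ X.filter (S.piecewise · (0 : ι → α) = p),
            ∏ i ∈ S, F i (x i) = ∏ i ∈ S, F i (p i) := fun x hx => prod_congr rfl fun i hi => by
          rw [← (mem_filter.1 hx).2, piecewise_eq_of_mem _ _ _ hi]
        rw [sum_congr rfl hconst, sum_const]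
        by_cases h : ∏ i ∈ S, F i (p i) = 0
        · simp [h]
        · rw [hfiber p hp h]
    _ = lam • ∏ i ∈ S, ∑ c, F i c := by rw [← smul_sum, sum_piFinset_prod_mem]

end Words

noncomputable def psiCoord (q r : ℕ) (ω : ℂ) (c : Fin (q + 1)) : ℂ :=
  if c = 0 then 0 else ω ^ (c : ℕ) / (Real.sqrt r : ℂ)

theorem psiMap_apply {d q r : ℕ} (ω : ℂ) (x : Fin d → Fin (q + 1)) (k : Fin d) :
    psiMap d q r ω x k = psiCoord q r ω (x k) := rfl

section PsiCoord

variable {q r : ℕ} {ω : ℂ}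

@[simp]
theorem psiCoord_zero : psiCoord q r ω 0 = 0 := if_pos rfl

theorem psiCoord_succ (c : Fin q) :
    psiCoord q r ω c.succ = ω ^ ((c : ℕ) + 1) / (Real.sqrt r : ℂ) := by
  simp [psiCoord, Fin.succ_ne_zero]

theorem psiCoord_succ_ne_zero (hω : IsPrimitiveRoot ω q) (hr : r ≠ 0) (c : Fin q) :
    psiCoord q r ω c.succ ≠ 0 := by
  rw [psiCoord_succ]
  exact div_ne_zero (pow_ne_zero _ (hω.ne_zero c.pos.ne'))
    (by exact_mod_cast (Real.sqrt_pos.2 (by positivity)).ne')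

theorem psiCoord_injective (hω : IsPrimitiveRoot ω q) (hr : r ≠ 0) :
    Function.Injective (psiCoord q r ω) := by
  intro c c' h
  induction c using Fin.cases <;> induction c' using Fin.cases
  · rfl
  · exact absurd (psiCoord_zero.symm.trans h).symm (psiCoord_succ_ne_zero hω hr _)
  · exact absurd (h.trans psiCoord_zero) (psiCoord_succ_ne_zero hω hr _)
  · rename_i c c'
    have hsqrt : (Real.sqrt r : ℂ) ≠ 0 := by
      exact_mod_cast (Real.sqrt_pos.2 (by positivity)).ne'
    rw [psiCoord_succ, psiCoord_succ, div_left_inj' hsqrt, pow_succ, pow_succ,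
      mul_left_inj' (hω.ne_zero c.pos.ne')] at h
    exact congrArg Fin.succ (Fin.ext (hω.pow_inj c.isLt c'.isLt h))

theorem psiCoord_mul_conj (hω : IsPrimitiveRoot ω q) (c : Fin (q + 1)) :
    psiCoord q r ω c * conj (psiCoord q r ω c) = if c = 0 then 0 else (r : ℂ)⁻¹ := by
  by_cases hc : c = 0
  · simp [hc]
  have hq : q ≠ 0 := by rintro rfl; exact hc (Fin.fin_one_eq_zero c)
  rw [if_neg hc, Complex.mul_conj, psiCoord, if_neg hc, map_div₀, map_pow,
    Complex.normSq_eq_norm_sq, hω.norm'_eq_one hq, Complex.normSq_ofReal,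
    Real.mul_self_sqrt (Nat.cast_nonneg r)]
  simp

/-- As `conj ω = ω⁻¹`, the summand at `c ≠ 0` is `ζ ^ c / √r ^ (m + n)` for the `q`-th root of
unity `ζ = ω ^ m * ω⁻¹ ^ n`, and `ζ ≠ 1` because `m, n < q`. -/
theorem sum_psiCoord_pow_mul_conj_pow (hω : IsPrimitiveRoot ω q) {m n : ℕ} (hmn : m ≠ n)
    (hq : m + n < q) : ∑ c, psiCoord q r ω c ^ m * conj (psiCoord q r ω c) ^ n = 0 := by
  have hq0 : q ≠ 0 := by omega
  have hconj : conj ω = ω⁻¹ := (Complex.inv_eq_conj (hω.norm'_eq_one hq0)).symm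
  set ζ := ω ^ m * ω⁻¹ ^ n
  have hζq : ζ ^ q = 1 := by
    rw [mul_pow, ← pow_mul, ← pow_mul, inv_pow, mul_comm m, mul_comm n, pow_mul, pow_mul,
      hω.pow_eq_one, one_pow, one_pow, inv_one, mul_one]
  have hζ : ζ ≠ 1 := by
    intro h
    refine hmn (hω.pow_inj (by omega) (by omega) ?_)
    rw [← mul_inv_eq_one₀ (pow_ne_zero n (hω.ne_zero hq0)), ← inv_pow]
    exact h
  have hterm : ∀ c : Fin q, psiCoord q r ω c.succ ^ m * conj (psiCoord q r ω c.succ) ^ n =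
      ζ ^ ((c : ℕ) + 1) / (Real.sqrt r : ℂ) ^ (m + n) := fun c => by
    rw [psiCoord_succ, map_div₀, map_pow, hconj, Complex.conj_ofReal]
    ring
  rw [Fin.sum_univ_succ, psiCoord_zero, map_zero, ← pow_add, zero_pow (by omega), zero_add,
    sum_congr rfl fun c _ => hterm c, ← sum_div, sum_fin_pow_succ_eq_zero hζq hζ, zero_div]

end PsiCoord

section Psi

variable {d q r : ℕ} {ω : ℂ}

theorem cInner_psiMap_self (hω : IsPrimitiveRoot ω q) (hr : r ≠ 0) {x : Fin d → Fin (q + 1)}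
    (hx : hammingNorm x = r) : cInner (psiMap d q r ω x) (psiMap d q r ω x) = 1 := by
  have hcard : #{i | ¬x i = 0} = r := hx
  simp only [cInner, psiMap_apply, mul_comm (conj _), psiCoord_mul_conj hω, sum_ite,
    sum_const_zero, sum_const, zero_add, nsmul_eq_mul, hcard]
  exact mul_inv_cancel₀ (Nat.cast_ne_zero.2 hr)

theorem sum_psiMap_mul_conj (hω : IsPrimitiveRoot ω q) (hr : r ≠ 0)
    {X : Finset (Fin d → Fin (q + 1))} (hrank : ∀ x ∈ X, hammingNorm x = r) {lam : ℕ}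
    (hX : IsBlockDesign X 1 lam) (i : Fin d) :
    ∑ x ∈ X, psiMap d q r ω x i * conj (psiMap d q r ω x i) = X.card / d := by
  set C := lam • ∑ c, psiCoord q r ω c * conj (psiCoord q r ω c)
  have hC : ∀ j, ∑ x ∈ X, psiMap d q r ω x j * conj (psiMap d q r ω x j) = C := fun j => by
    have hXj : IsBlockDesign X #{j} lam := by rwa [card_singleton]
    simpa only [prod_singleton, psiMap_apply] using
      hXj.sum_prod_apply (fun _ c => psiCoord q r ω c * conj (psiCoord q r ω c)) (by simp)
  have hsum : (d : ℂ) * C = X.card := by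
    calc (d : ℂ) * C = ∑ j, ∑ x ∈ X, psiMap d q r ω x j * conj (psiMap d q r ω x j) := by
          simp [hC]
      _ = ∑ x ∈ X, cInner (psiMap d q r ω x) (psiMap d q r ω x) := by
          rw [sum_comm]
          exact sum_congr rfl fun x _ => sum_congr rfl fun j _ => mul_comm _ _
      _ = X.card := by
          rw [sum_congr rfl fun x hx => cInner_psiMap_self hω hr (hrank x hx)]
          simp
  rw [hC i, ← hsum, mul_div_cancel_left₀ _ (Nat.cast_ne_zero.2 i.pos.ne')]

theorem sum_monomial_psiMap_eq_zero (hω : IsPrimitiveRoot ω q) {X : Finset (Fin d → Fin (q + 1))}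
    {t lam : ℕ} (hrank : ∀ x ∈ X, hammingNorm x = r) (hX : IsBlockDesign X t lam) (htr : t ≤ r)
    {a b : Fin d → ℕ} (hab : a ≠ b) (ht : ∑ i, a i + ∑ i, b i ≤ t)
    (hq : ∑ i, a i + ∑ i, b i < q) :
    ∑ x ∈ X, (∏ i, psiMap d q r ω x i ^ a i) * ∏ i, conj (psiMap d q r ω x i) ^ b i = 0 := by
  set S : Finset (Fin d) := {i | a i + b i ≠ 0}
  have hS : #S ≤ ∑ i, a i + ∑ i, b i := by
    rw [← sum_add_distrib]; exact card_filter_ne_zero_le_sum _ _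
  obtain ⟨lamS, hXS⟩ := hX.exists_of_le hrank htr (hS.trans ht)
  obtain ⟨i, hi⟩ := Function.ne_iff.1 hab
  have hiS : i ∈ S := by simp only [S, mem_filter, mem_univ, true_and]; omega
  have hiq : a i + b i < q := by
    have ha := single_le_sum (fun j _ => Nat.zero_le (a j)) (mem_univ i)
    have hb := single_le_sum (fun j _ => Nat.zero_le (b j)) (mem_univ i)
    omega
  simp only [prod_pow_mul_prod_pow, psiMap_apply]
  rw [hXS.sum_prod_apply (fun i c => psiCoord q r ω c ^ a i * conj (psiCoord q r ω c) ^ b i),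
    prod_eq_zero hiS (sum_psiCoord_pow_mul_conj_pow hω hi hiq), smul_zero]
  intro j hj
  rw [psiCoord_zero, map_zero, ← pow_add, zero_pow (mem_filter.1 hj).2]

end Psi

theorem monomialAvg_zero (d : ℕ) : monomialAvg d 0 0 = 1 := by
  simp [monomialAvg, Nat.factorial_ne_zero]

theorem monomialAvg_single {d : ℕ} (i : Fin d) :
    monomialAvg d (Pi.single i 1) (Pi.single i 1) = (d : ℂ)⁻¹ := by
  have hfac : ∀ j, ((Pi.single i 1 : Fin d → ℕ) j).factorial = 1 := fun j => by
    by_cases h : j = i <;> simp [h]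
  have hd : d ≠ 0 := i.pos.ne'
  rw [monomialAvg, if_pos rfl]
  simp only [hfac, Nat.cast_one, prod_const_one, mul_one, sum_pi_single', mem_univ, if_true,
    Nat.add_sub_cancel, ← Nat.mul_factorial_pred hd, Nat.cast_mul]
  have : ((d - 1).factorial : ℂ) ≠ 0 := Nat.cast_ne_zero.2 (Nat.factorial_ne_zero _)
  field_simp

theorem stmt_19_general {d q : ℕ} (hq : 3 ≤ q) (t r : ℕ)
    (ht : 2 ≤ t) (htr : t ≤ r)
    (ω : ℂ) (hω : IsPrimitiveRoot ω q)
    (X : Finset (Fin d → Fin (q + 1)))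
    (hrank : ∀ x ∈ X, (Finset.univ.filter fun i => x i ≠ 0).card = r)
    (lam : ℕ)
    (hblock : ∀ y : Fin d → Fin (q + 1),
      (Finset.univ.filter fun i => y i ≠ 0).card = t →
      (X.filter fun x => ∀ i, y i = 0 ∨ y i = x i).card = lam) :
    Set.InjOn (psiMap d q r ω) ↑X ∧
    (∀ x ∈ X, cInner (psiMap d q r ω x) (psiMap d q r ω x) = 1) ∧
    IsDesign d (X.image (psiMap d q r ω))
      (((Finset.range 3) ×ˢ (Finset.range 3)).filter fun p => p.1 + p.2 ≤ 2) := by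
  have hr : r ≠ 0 := by omega
  have hrank' : ∀ x ∈ X, hammingNorm x = r := hrank
  have hX : IsBlockDesign X t lam := fun y hy => by
    convert hblock y hy using 3; exact Iff.rfl
  have hinj : Set.InjOn (psiMap d q r ω) X := fun x _ y _ h =>
    funext fun k => psiCoord_injective hω hr (congrFun h k)
  refine ⟨hinj, fun x hx => cInner_psiMap_self hω hr (hrank' x hx), ?_⟩
  rintro ⟨k, l⟩ hkl a b rfl rfl
  simp only [mem_filter, mem_product, mem_range] at hkl
  rw [sum_image fun x hx y hy h => hinj hx hy h, card_image_of_injOn hinj]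
  by_cases hab : a = b
  · subst hab
    obtain h0 | h1 : ∑ i, a i = 0 ∨ ∑ i, a i = 1 := by omega
    · obtain rfl : a = 0 := funext fun i => sum_eq_zero_iff.1 h0 i (mem_univ i)
      simp [monomialAvg_zero]
    · obtain ⟨i, rfl⟩ := exists_eq_pi_single_of_sum_eq_one h1
      obtain ⟨lam1, hX1⟩ := hX.exists_of_le hrank' htr (by omega : 1 ≤ t)
      simp only [prod_pow_pi_single, monomialAvg_single]
      rw [sum_psiMap_mul_conj hω hr hrank' hX1 i, div_eq_mul_inv]
  · rw [sum_monomial_psiMap_eq_zero hω hrank' hX htr hab (by omega) (by omega), monomialAvg,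
      if_neg hab, mul_zero]

/-- a nonbinary block `t`-design `X` of words of rank `r` over
`{0,…,q}` (`q ≥ 3`, `2 ≤ t ≤ r ≤ d`) maps under `ψ` injectively into `Ω(d)`,
and `ψ(X)` is a complex spherical `{(k,l) : k+l ≤ 2}`-design. -/
theorem stmt_19 {d q : ℕ} (hq : 3 ≤ q) (hd : 1 ≤ d) (t r : ℕ)
    (ht : 2 ≤ t) (htr : t ≤ r) (hrd : r ≤ d)
    (ω : ℂ) (hω : IsPrimitiveRoot ω q)
    (X : Finset (Fin d → Fin (q + 1))) (hXne : X.Nonempty)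
    (hrank : ∀ x ∈ X, (Finset.univ.filter fun i => x i ≠ 0).card = r)
    (lam : ℕ)
    (hblock : ∀ y : Fin d → Fin (q + 1),
      (Finset.univ.filter fun i => y i ≠ 0).card = t →
      (X.filter fun x => ∀ i, y i = 0 ∨ y i = x i).card = lam) :
    Set.InjOn (psiMap d q r ω) ↑X ∧
    (∀ x ∈ X, cInner (psiMap d q r ω x) (psiMap d q r ω x) = 1) ∧
    IsDesign d (X.image (psiMap d q r ω))
      (((Finset.range 3) ×ˢ (Finset.range 3)).filter fun p => p.1 + p.2 ≤ 2) :=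
  stmt_19_general hq t r ht htr ω hω X hrank lam hblock
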